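/- Let p be an odd prime with p = p_n and n ≥ 3. Then the following two conditions are equivalent: (Condition 3) every integer k with (p_{n-1}+1)/2 ≤ k ≤ (p−1)/2 is composite (equivalently, there is no prime q with p_{n-1}/2 < q < p/2); (Condition 4) letting m be the unique index with p_m < p/2 < p_{m+1}, the open interval (2p_m, p) contains a prime. -/

import Mathlib

/-!
Since `p_{n-1}` is the largest prime below `p` and `p_m` the largest prime below `p / 2`,
both conditions say that `2 p_m < p_{n-1}`: Condition 3 because the primes `k` with
`2k < p` are exactly those with `k ≤ p_m`, and Condition 4 because a prime in `(2 p_m, p)`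
exists iff `p_{n-1}` is one.
-/

/-- `nthPrime n` is the n-th prime with 1-based indexing: p_1 = 2, p_2 = 3, ... -/
noncomputable def nthPrime (n : ℕ) : ℕ := Nat.nth Nat.Prime (n - 1)

theorem nthPrime_prime (n : ℕ) : (nthPrime n).Prime :=
  Nat.prime_nth_prime _

theorem nthPrime_pred_lt {n : ℕ} (hn : 2 ≤ n) : nthPrime (n - 1) < nthPrime n :=
  (Nat.nth_lt_nth Nat.infinite_setOfPred_prime).2 (by omega)

theorem le_nthPrime_of_lt_nthPrime_succ {q n : ℕ} (hq : q.Prime) (h : q < nthPrime (n + 1)) :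
    q ≤ nthPrime n := by
  rcases n with _ | n
  · exact absurd (Nat.nth_prime_zero_eq_two ▸ h) hq.two_le.not_gt
  · exact Nat.le_nth_of_lt_nth_succ h hq

theorem condition3_iff_condition4_general (p n m : ℕ) (hn : 3 ≤ n)
    (hp : p = nthPrime n)
    (hm1 : 2 * nthPrime m < p) (hm2 : p < 2 * nthPrime (m + 1)) :
    (∀ k : ℕ, (nthPrime (n - 1) + 1) / 2 ≤ k → k ≤ (p - 1) / 2 → ¬ k.Prime) ↔
    (∃ q : ℕ, q.Prime ∧ 2 * nthPrime m < q ∧ q < p) := by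
  constructor
  · intro h
    refine ⟨nthPrime (n - 1), nthPrime_prime _, ?_, hp ▸ nthPrime_pred_lt (by omega)⟩
    by_contra! hle
    exact h (nthPrime m) (by omega) (by omega) (nthPrime_prime m)
  · rintro ⟨q, hq, hmq, hqp⟩ k hPk hkp hk
    have hkm : k ≤ nthPrime m := le_nthPrime_of_lt_nthPrime_succ hk (by omega)
    have hqP : q ≤ nthPrime (n - 1) :=
      le_nthPrime_of_lt_nthPrime_succ hq (by rwa [Nat.sub_add_cancel (by omega), ← hp])
    omega

/-- Let p be an odd prime with p = p_n, n ≥ 3.  Then Condition 3 (every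
integer k with (p_{n-1}+1)/2 ≤ k ≤ (p−1)/2 is composite) is equivalent to
Condition 4 (with m the unique index such that p_m < p/2 < p_{m+1}, the open
interval (2p_m, p) contains a prime). -/
theorem condition3_iff_condition4 (p n m : ℕ) (hn : 3 ≤ n) (hm : 1 ≤ m)
    (hp : p = nthPrime n) (hodd : Odd p)
    (hm1 : 2 * nthPrime m < p) (hm2 : p < 2 * nthPrime (m + 1)) :
    (∀ k : ℕ, (nthPrime (n - 1) + 1) / 2 ≤ k → k ≤ (p - 1) / 2 → ¬ k.Prime) ↔
    (∃ q : ℕ, q.Prime ∧ 2 * nthPrime m < q ∧ q < p) :=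
  condition3_iff_condition4_general p n m hn hp hm1 hm2
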